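/- arXiv:1805.08945 — 3 statements merged into one kernel-verified Lean document; each statement's English description precedes it below -/
import Mathlib

section
/- For every n ≥ 1 the following identity holds in ℤ[t,q]: Σ_{π∈S_n(231)} t^{des π} q^{(13-2)π} = Σ_{k=0}^{⌊(n−1)/2⌋} ( Σ_{π∈T_{n,k}(231)} q^{(13-2)π} ) · t^k (1+t)^{n−1−2k}. -/
/-!
A 231-avoiding permutation of size `n` with its maximum at position `a + 1` is `σ n ρ⁺`, where
`σ ∈ S_a(231)`, `ρ ∈ S_b(231)`, `a + b + 1 = n` and `ρ⁺` is `ρ` shifted up by `a`: avoiding 231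
puts every entry left of `n` below every entry right of it, and counting then forces the left
entries to be `1, …, a`. Under this decomposition `des` and `13-2` are additive up to a
correction depending only on `a, b`, and `σ n ρ⁺` has no double descent iff `σ` and `ρ` have
none and `σ` is empty only when `ρ` is. Hence both sides of the identity, as sequences in `n`,
satisfy `X₀ = X₁ = 1`, `X_{n+2} = (1 + t) X_{n+1} + t ∑_{a<n} q^{n-a} X_{a+1} X_{n-a}`:
on the left the factor `1 + t` comes from `ρ` or `σ` being empty, on the right from appending
the maximum to a permutation without double descents, which adds one to the exponent of `1 + t`.
-/

open scoped Classical
open Finset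

/-- Value of `π` at the 1-indexed position `i`, as a number in `{1,…,n}`;
positions outside `[1,n]` get the boundary value `b`. -/
def pvalB {n : ℕ} (b : ℕ) (π : Equiv.Perm (Fin n)) (i : ℕ) : ℕ :=
  if h : 1 ≤ i ∧ i ≤ n then (π ⟨i - 1, by omega⟩).val + 1 else b

/-- Value of `π` at the 1-indexed position `i` (boundary value 0). -/
def pval {n : ℕ} (π : Equiv.Perm (Fin n)) : ℕ → ℕ := pvalB 0 π

/-- number of descents -/
def desStat {n : ℕ} (π : Equiv.Perm (Fin n)) : ℕ :=
  ((Finset.Icc 1 (n - 1)).filter fun i => pval π (i + 1) < pval π i).card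

/-- number of excedances -/
def excStat {n : ℕ} (π : Equiv.Perm (Fin n)) : ℕ :=
  ((Finset.Icc 1 n).filter fun i => i < pval π i).card

/-- number of weak excedances -/
def wexStat {n : ℕ} (π : Equiv.Perm (Fin n)) : ℕ :=
  ((Finset.Icc 1 n).filter fun i => i ≤ pval π i).card

/-- number of inversions -/
def invStat {n : ℕ} (π : Equiv.Perm (Fin n)) : ℕ :=
  (((Finset.Icc 1 n) ×ˢ (Finset.Icc 1 n)).filter fun p =>
    p.1 < p.2 ∧ pval π p.2 < pval π p.1).card

/-- number of fixed points -/
def fixStat {n : ℕ} (π : Equiv.Perm (Fin n)) : ℕ :=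
  ((Finset.Icc 1 n).filter fun i => pval π i = i).card

/-- number of occurrences of the vincular pattern 31-2:
pairs (i,j) with i+1 < j ≤ n and π(i+1) < π(j) < π(i) -/
def v31_2 {n : ℕ} (π : Equiv.Perm (Fin n)) : ℕ :=
  (((Finset.Icc 1 n) ×ˢ (Finset.Icc 1 n)).filter fun p =>
    p.1 + 1 < p.2 ∧ pval π (p.1 + 1) < pval π p.2 ∧ pval π p.2 < pval π p.1).card

/-- number of occurrences of the vincular pattern 13-2:
pairs (i,j) with i+1 < j ≤ n and π(i) < π(j) < π(i+1) -/
def v13_2 {n : ℕ} (π : Equiv.Perm (Fin n)) : ℕ :=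
  (((Finset.Icc 1 n) ×ˢ (Finset.Icc 1 n)).filter fun p =>
    p.1 + 1 < p.2 ∧ pval π p.1 < pval π p.2 ∧ pval π p.2 < pval π (p.1 + 1)).card

/-- number of occurrences of the vincular pattern 2-31:
pairs (i,j) with 1 ≤ j < i ≤ n-1 and π(i+1) < π(j) < π(i); here `p = (i, j)` -/
def v2_31 {n : ℕ} (π : Equiv.Perm (Fin n)) : ℕ :=
  (((Finset.Icc 1 (n - 1)) ×ˢ (Finset.Icc 1 (n - 1))).filter fun p =>
    p.2 < p.1 ∧ pval π (p.1 + 1) < pval π p.2 ∧ pval π p.2 < pval π p.1).card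

/-- number of occurrences of the vincular pattern 2-13:
pairs (i,j) with 1 ≤ j < i ≤ n-1 and π(i) < π(j) < π(i+1); here `p = (i, j)` -/
def v2_13 {n : ℕ} (π : Equiv.Perm (Fin n)) : ℕ :=
  (((Finset.Icc 1 (n - 1)) ×ˢ (Finset.Icc 1 (n - 1))).filter fun p =>
    p.2 < p.1 ∧ pval π p.1 < pval π p.2 ∧ pval π p.2 < pval π (p.1 + 1)).card

/-- number of occurrences of the vincular pattern 3-12:
pairs (i,j) with 1 ≤ i < j ≤ n-1 and π(j) < π(j+1) < π(i) -/
def v3_12 {n : ℕ} (π : Equiv.Perm (Fin n)) : ℕ :=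
  (((Finset.Icc 1 (n - 1)) ×ˢ (Finset.Icc 1 (n - 1))).filter fun p =>
    p.1 < p.2 ∧ pval π p.2 < pval π (p.2 + 1) ∧ pval π (p.2 + 1) < pval π p.1).card

/-- number of admissible inversions -/
noncomputable def adiStat {n : ℕ} (π : Equiv.Perm (Fin n)) : ℕ :=
  (((Finset.Icc 1 n) ×ˢ (Finset.Icc 1 n)).filter fun p =>
    p.1 < p.2 ∧ pval π p.2 < pval π p.1 ∧
      ((p.2 < n ∧ pval π p.2 < pval π (p.2 + 1)) ∨
        ∃ l, p.1 < l ∧ l < p.2 ∧ pval π l < pval π p.2)).card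

/-- number of star admissible inversions -/
noncomputable def adiStarStat {n : ℕ} (π : Equiv.Perm (Fin n)) : ℕ :=
  (((Finset.Icc 1 n) ×ˢ (Finset.Icc 1 n)).filter fun p =>
    p.1 < p.2 ∧ pval π p.2 < pval π p.1 ∧
      ((1 < p.1 ∧ pval π (p.1 - 1) < pval π p.1) ∨
        ∃ l, p.1 < l ∧ l < p.2 ∧ pval π p.1 < pval π l)).card

/-- nesting number -/
def nestStat {n : ℕ} (π : Equiv.Perm (Fin n)) : ℕ :=
  (((Finset.Icc 1 n) ×ˢ (Finset.Icc 1 n)).filter fun p =>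
    p.1 < p.2 ∧ p.2 ≤ pval π p.2 ∧ pval π p.2 < pval π p.1).card +
  (((Finset.Icc 1 n) ×ˢ (Finset.Icc 1 n)).filter fun p =>
    p.1 < p.2 ∧ pval π p.2 < pval π p.1 ∧ pval π p.1 < p.1).card

/-- `π` avoids the pattern given (in one-line notation) by the sequence `p` -/
def avoids {n k : ℕ} (π : Equiv.Perm (Fin n)) (p : Fin k → ℕ) : Prop :=
  ¬ ∃ f : Fin k ↪o Fin n, ∀ a b : Fin k, p a < p b ↔ π (f a) < π (f b)

/-- `π` has no double descent, with boundary values `b` at positions 0 and n+1 -/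
def noDD {n : ℕ} (b : ℕ) (π : Equiv.Perm (Fin n)) : Prop :=
  ∀ i, 1 ≤ i → i ≤ n →
    ¬ (pvalB b π i < pvalB b π (i - 1) ∧ pvalB b π (i + 1) < pvalB b π i)

/-- alternating (up-down): π(1) < π(2) > π(3) < π(4) > ⋯ -/
def isAlt {n : ℕ} (π : Equiv.Perm (Fin n)) : Prop :=
  ∀ i, 1 ≤ i → i + 1 ≤ n →
    (Odd i → pval π i < pval π (i + 1)) ∧ (Even i → pval π (i + 1) < pval π i)

/-- down-up: π(1) > π(2) < π(3) > π(4) < ⋯ -/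
def isDownUp {n : ℕ} (π : Equiv.Perm (Fin n)) : Prop :=
  ∀ i, 1 ≤ i → i + 1 ≤ n →
    (Odd i → pval π (i + 1) < pval π i) ∧ (Even i → pval π i < pval π (i + 1))

/-- `i` is a foremaximum of `π` -/
def isForemax {n : ℕ} (π : Equiv.Perm (Fin n)) (i : ℕ) : Prop :=
  1 ≤ i ∧ i ≤ n ∧ (∀ j, 1 ≤ j → j ≤ i → pval π j ≤ pval π i) ∧
    (i = n ∨ pval π i < pval π (i + 1))

/-- coderangement: no foremaximum -/
def isCoderangement {n : ℕ} (π : Equiv.Perm (Fin n)) : Prop :=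
  ∀ i, ¬ isForemax π i

/-- derangement: no fixed point -/
def isDerangement {n : ℕ} (π : Equiv.Perm (Fin n)) : Prop := ∀ i, π i ≠ i

/-- the order-reversing permutation of positions -/
def revPermN (n : ℕ) : Equiv.Perm (Fin n) := ⟨Fin.rev, Fin.rev, Fin.rev_rev, Fin.rev_rev⟩

/-- the reverse of `π`: πʳ(i) = π(n+1-i) -/
def reverseP {n : ℕ} (π : Equiv.Perm (Fin n)) : Equiv.Perm (Fin n) := (revPermN n).trans π

noncomputable def tP : MvPolynomial (Fin 2) ℤ := MvPolynomial.X 0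
noncomputable def qP : MvPolynomial (Fin 2) ℤ := MvPolynomial.X 1

section Word

variable {n : ℕ}

lemma pvalB_eq_pval (c : ℕ) (π : Equiv.Perm (Fin n)) {i : ℕ} (h1 : 1 ≤ i) (h2 : i ≤ n) :
    pvalB c π i = pval π i := by
  simp [pval, pvalB, h1, h2]

lemma pvalB_of_out (c : ℕ) (π : Equiv.Perm (Fin n)) {i : ℕ} (h : i = 0 ∨ n < i) :
    pvalB c π i = c :=
  dif_neg (by omega)

lemma pval_of_out (π : Equiv.Perm (Fin n)) {i : ℕ} (h : i = 0 ∨ n < i) : pval π i = 0 :=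
  pvalB_of_out 0 π h

lemma pval_val_add_one (π : Equiv.Perm (Fin n)) (x : Fin n) : pval π (x + 1) = π x + 1 := by
  simp [pval, pvalB, Nat.succ_le_of_lt x.isLt]

lemma pval_le (π : Equiv.Perm (Fin n)) (i : ℕ) : pval π i ≤ n := by
  unfold pval pvalB
  split_ifs
  · exact Fin.is_lt _
  · exact Nat.zero_le n

lemma one_le_pval (π : Equiv.Perm (Fin n)) {i : ℕ} (h1 : 1 ≤ i) (h2 : i ≤ n) : 1 ≤ pval π i := by
  simp [pval, pvalB, h1, h2]

lemma exists_fin_val_add_one_eq {i : ℕ} (h1 : 1 ≤ i) (h2 : i ≤ n) : ∃ x : Fin n, (x : ℕ) + 1 = i :=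
  ⟨⟨i - 1, by omega⟩, by simp; omega⟩

lemma pval_inj (π : Equiv.Perm (Fin n)) {i j : ℕ} (hi1 : 1 ≤ i) (hi2 : i ≤ n) (hj1 : 1 ≤ j)
    (hj2 : j ≤ n) (h : pval π i = pval π j) : i = j := by
  obtain ⟨x, rfl⟩ := exists_fin_val_add_one_eq hi1 hi2
  obtain ⟨y, rfl⟩ := exists_fin_val_add_one_eq hj1 hj2
  rw [pval_val_add_one, pval_val_add_one, add_left_inj, Fin.val_inj, π.apply_eq_iff_eq] at h
  rw [h]

lemma pval_inv_eq_iff (π : Equiv.Perm (Fin n)) {i u : ℕ} (hi1 : 1 ≤ i) (hi2 : i ≤ n) (hu1 : 1 ≤ u)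
    (hu2 : u ≤ n) : pval π⁻¹ u = i ↔ pval π i = u := by
  obtain ⟨x, rfl⟩ := exists_fin_val_add_one_eq hi1 hi2
  obtain ⟨y, rfl⟩ := exists_fin_val_add_one_eq hu1 hu2
  rw [pval_val_add_one, pval_val_add_one, add_left_inj, add_left_inj, Fin.val_inj, Fin.val_inj,
    Equiv.Perm.inv_eq_iff_eq, eq_comm]

lemma perm_eq_of_pval_eq {σ τ : Equiv.Perm (Fin n)} (h : ∀ i, 1 ≤ i → i ≤ n → pval σ i = pval τ i) :
    σ = τ := by
  ext x
  simpa [pval_val_add_one] using h (x + 1) (by omega) (by omega)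

/-- The permutation whose one-line word is `f` on `[1, n]`; it is the junk value `1` unless `f`
maps `[1, n]` injectively into itself. -/
noncomputable def permOfWord (n : ℕ) (f : ℕ → ℕ) : Equiv.Perm (Fin n) :=
  if h : Set.MapsTo f (Set.Icc 1 n) (Set.Icc 1 n) ∧ Set.InjOn f (Set.Icc 1 n) then
    Equiv.ofBijective (fun x => ⟨f (x + 1) - 1, by
        have := (h.1 (x := x + 1) ⟨by omega, x.isLt⟩).2; have := x.isLt; omega⟩)
      (Finite.injective_iff_bijective.mp fun x y hxy => by
        have hx := (h.1 (x := x + 1) ⟨by omega, x.isLt⟩).1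
        have hy := (h.1 (x := y + 1) ⟨by omega, y.isLt⟩).1
        have := h.2 (x₁ := x + 1) (x₂ := y + 1) ⟨by omega, x.isLt⟩ ⟨by omega, y.isLt⟩
          (by simp only [Fin.mk.injEq] at hxy; omega)
        exact Fin.ext (by omega))
  else 1

lemma pval_permOfWord {f : ℕ → ℕ} (hmaps : Set.MapsTo f (Set.Icc 1 n) (Set.Icc 1 n))
    (hinj : Set.InjOn f (Set.Icc 1 n)) {i : ℕ} (h1 : 1 ≤ i) (h2 : i ≤ n) :
    pval (permOfWord n f) i = f i := by
  obtain ⟨x, rfl⟩ := exists_fin_val_add_one_eq h1 h2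
  have := (hmaps (x := x + 1) ⟨by omega, x.isLt⟩).1
  rw [pval_val_add_one, permOfWord, dif_pos ⟨hmaps, hinj⟩, Equiv.ofBijective_apply]
  simp only
  omega

end Word

section Pattern231

variable {n : ℕ}

def Has231 (π : Equiv.Perm (Fin n)) : Prop :=
  ∃ i j k, 1 ≤ i ∧ i < j ∧ j < k ∧ k ≤ n ∧ pval π k < pval π i ∧ pval π i < pval π j

lemma exists_embedding_iff_has231 (π : Equiv.Perm (Fin n)) :
    (∃ f : Fin 3 ↪o Fin n, ∀ a b : Fin 3, ![2, 3, 1] a < ![2, 3, 1] b ↔ π (f a) < π (f b)) ↔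
      Has231 π := by
  constructor
  · rintro ⟨f, hf⟩
    have h01 : f 0 < f 1 := f.strictMono (by decide)
    have h12 : f 1 < f 2 := f.strictMono (by decide)
    have h20 := (hf 2 0).1 (by decide)
    have h01' := (hf 0 1).1 (by decide)
    refine ⟨f 0 + 1, f 1 + 1, f 2 + 1, by omega, by simp [h01], by simp [h12],
      (f 2).isLt, ?_, ?_⟩ <;> simp [pval_val_add_one, h20, h01']
  · rintro ⟨i, j, k, hi, hij, hjk, hk, hki, hij'⟩
    obtain ⟨x, rfl⟩ := exists_fin_val_add_one_eq hi (by omega : i ≤ n)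
    obtain ⟨y, rfl⟩ := exists_fin_val_add_one_eq (by omega : 1 ≤ j) (by omega : j ≤ n)
    obtain ⟨z, rfl⟩ := exists_fin_val_add_one_eq (by omega : 1 ≤ k) hk
    simp only [pval_val_add_one, add_lt_add_iff_right] at hki hij'
    have hmono : StrictMono ![x, y, z] := by
      refine Fin.strictMono_iff_lt_succ.2 fun m => ?_
      fin_cases m <;> simp [Fin.lt_def, -Fin.val_fin_lt] <;> omega
    refine ⟨OrderEmbedding.ofStrictMono _ hmono, fun a b => ?_⟩
    fin_cases a <;> fin_cases b <;> simp [Fin.lt_def, -Fin.val_fin_lt] <;> omega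

lemma avoids_231_iff (π : Equiv.Perm (Fin n)) : avoids π ![2, 3, 1] ↔ ¬ Has231 π :=
  not_congr (exists_embedding_iff_has231 π)

noncomputable def avoiders231 (n : ℕ) : Finset (Equiv.Perm (Fin n)) :=
  univ.filter fun π => avoids π ![2, 3, 1]

lemma mem_avoiders231 {π : Equiv.Perm (Fin n)} : π ∈ avoiders231 n ↔ ¬ Has231 π := by
  simp [avoiders231, avoids_231_iff]

end Pattern231

lemma sum_Icc_one_split {M : Type*} [AddCommMonoid M] {a b n : ℕ} (h : a + b + 1 = n)
    (g : ℕ → M) :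
    ∑ i ∈ Icc 1 n, g i = ∑ i ∈ Icc 1 a, g i + g (a + 1) + ∑ j ∈ Icc 1 b, g (a + 1 + j) := by
  subst h
  induction b with
  | zero => simp [sum_Icc_succ_top]
  | succ b ih =>
    rw [show a + (b + 1) + 1 = a + b + 1 + 1 by ring, sum_Icc_succ_top (by omega), ih,
      sum_Icc_succ_top (by omega), show a + 1 + (b + 1) = a + b + 1 + 1 by ring, add_assoc]

lemma forall_Icc_one_split {P : ℕ → Prop} {a b n : ℕ} (h : a + b + 1 = n) :
    (∀ i, 1 ≤ i → i ≤ n → P i) ↔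
      (∀ i, 1 ≤ i → i ≤ a → P i) ∧ P (a + 1) ∧ ∀ j, 1 ≤ j → j ≤ b → P (a + 1 + j) := by
  refine ⟨fun hP => ⟨fun i h1 h2 => hP i h1 (by omega), hP _ (by omega) (by omega),
    fun j h1 h2 => hP _ (by omega) (by omega)⟩, fun ⟨hl, hm, hr⟩ i h1 h2 => ?_⟩
  rcases lt_trichotomy i (a + 1) with hi | rfl | hi
  · exact hl i h1 (by omega)
  · exact hm
  · obtain ⟨j, rfl⟩ : ∃ j, i = a + 1 + j := ⟨i - (a + 1), by omega⟩
    exact hr j (by omega) (by omega)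


section Statistics

variable {n : ℕ}

lemma desStat_eq_card (π : Equiv.Perm (Fin n)) :
    desStat π = #{i ∈ Icc 1 n | i < n ∧ pval π (i + 1) < pval π i} := by
  unfold desStat
  congr 1
  ext i
  simp only [mem_filter, mem_Icc]
  omega

lemma noDD_succ_iff (π : Equiv.Perm (Fin n)) :
    noDD (n + 1) π ↔ ∀ i, 1 ≤ i → i ≤ n →
      i < n → pval π (i + 1) < pval π i → 1 < i ∧ pval π (i - 1) < pval π i := by
  refine forall_congr' fun i => forall_congr' fun h1 => forall_congr' fun h2 => ?_
  have hi := pvalB_eq_pval (n + 1) π h1 h2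
  have hπi := pval_le π i
  rcases (show i = n ∨ i < n by omega) with hin | hin <;>
    rcases (show i = 1 ∨ 1 < i by omega) with rfl | hi1
  · rw [pvalB_of_out _ π (i := 1 + 1) (by omega)]; omega
  · rw [pvalB_of_out _ π (i := i + 1) (by omega)]; omega
  · rw [pvalB_of_out _ π (i := 1 - 1) (by omega), pvalB_eq_pval _ π (i := 1 + 1) (by omega) hin]
    omega
  · have := pval_inj π (i := i - 1) (j := i) (by omega) (by omega) h1 h2
    rw [pvalB_eq_pval _ π (i := i - 1) (by omega) (by omega),
      pvalB_eq_pval _ π (i := i + 1) (by omega) hin]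
    omega

/-- Every descent `i` is preceded by an ascent at `i - 1`, so the descents and the positions just
before them are `2 * desStat π` distinct elements of `[1, n - 1]`. -/
lemma two_mul_desStat_le (π : Equiv.Perm (Fin n)) (h : noDD (n + 1) π) :
    2 * desStat π ≤ n - 1 := by
  rw [noDD_succ_iff] at h
  rw [desStat_eq_card]
  set D := {i ∈ Icc 1 n | i < n ∧ pval π (i + 1) < pval π i}
  have hD : ∀ i ∈ D, 1 < i ∧ i < n ∧ i - 1 ∉ D := fun i hi => by
    simp only [D, mem_filter, mem_Icc] at hi ⊢
    have := h i hi.1.1 hi.1.2 hi.2.1 hi.2.2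
    rw [Nat.sub_add_cancel (by omega : 1 ≤ i)]
    omega
  have hdisj : Disjoint D (D.image (· - 1)) := by
    simp only [disjoint_left, mem_image, not_exists, not_and]
    intro x hx y hy hyx
    exact (hD y hy).2.2 (hyx ▸ hx)
  have hsub : D ∪ D.image (· - 1) ⊆ Icc 1 (n - 1) := by
    intro x hx
    simp only [mem_union, mem_image] at hx
    rw [mem_Icc]
    rcases hx with hx | ⟨y, hy, rfl⟩
    · have := hD x hx; omega
    · have := hD y hy; omega
  have hcard := card_le_card hsub
  rw [card_union_of_disjoint hdisj, card_image_of_injOn fun x hx y hy hxy => by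
    have := hD x hx; have := hD y hy; omega, Nat.card_Icc] at hcard
  omega

def ind13_2 (π : Equiv.Perm (Fin n)) (i j : ℕ) : ℕ :=
  if i + 1 < j ∧ pval π i < pval π j ∧ pval π j < pval π (i + 1) then 1 else 0

lemma v13_2_eq_sum (π : Equiv.Perm (Fin n)) :
    v13_2 π = ∑ i ∈ Icc 1 n, ∑ j ∈ Icc 1 n, ind13_2 π i j := by
  rw [v13_2, card_filter, sum_product]
  rfl

end Statistics

section MaxJoin

variable {a b n : ℕ}

/-- `π = σ n ρ⁺` in one-line notation, where `ρ⁺` adds `a` to every entry of `ρ`. -/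
structure IsMaxJoin (π : Equiv.Perm (Fin n)) (σ : Equiv.Perm (Fin a)) (ρ : Equiv.Perm (Fin b)) :
    Prop where
  size_eq : a + b + 1 = n
  left : ∀ i, 1 ≤ i → i ≤ a → pval π i = pval σ i
  max : pval π (a + 1) = n
  right : ∀ j, 1 ≤ j → j ≤ b → pval π (a + 1 + j) = a + pval ρ j

namespace IsMaxJoin

variable {π π' : Equiv.Perm (Fin n)} {σ : Equiv.Perm (Fin a)} {ρ : Equiv.Perm (Fin b)}

lemma pval_le_of_le (H : IsMaxJoin π σ ρ) {i : ℕ} (hi : i ≤ a) : pval π i ≤ a := by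
  rcases Nat.eq_zero_or_pos i with rfl | hi0
  · rw [pval_of_out π (Or.inl rfl)]; omega
  · rw [H.left i hi0 hi]; exact pval_le σ i

lemma lt_pval_of_lt (H : IsMaxJoin π σ ρ) {i : ℕ} (hi : a + 1 < i) (hin : i ≤ n) :
    a < pval π i ∧ pval π i < n := by
  obtain ⟨j, rfl⟩ : ∃ j, i = a + 1 + j := ⟨i - (a + 1), by omega⟩
  have := H.size_eq
  rw [H.right j (by omega) (by omega)]
  have := one_le_pval ρ (i := j) (by omega) (by omega)
  have := pval_le ρ j
  omega

lemma unique (H : IsMaxJoin π σ ρ) (H' : IsMaxJoin π' σ ρ) : π = π' := by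
  refine perm_eq_of_pval_eq fun i h1 h2 => ?_
  rcases lt_trichotomy i (a + 1) with hi | rfl | hi
  · rw [H.left i h1 (by omega), H'.left i h1 (by omega)]
  · rw [H.max, H'.max]
  · obtain ⟨j, rfl⟩ : ∃ j, i = a + 1 + j := ⟨i - (a + 1), by omega⟩
    have := H.size_eq
    rw [H.right j (by omega) (by omega), H'.right j (by omega) (by omega)]

end IsMaxJoin

def joinWord (a n : ℕ) (u v : ℕ → ℕ) (i : ℕ) : ℕ :=
  if i ≤ a then u i else if i = a + 1 then n else a + v (i - (a + 1))

noncomputable def maxJoin (n : ℕ) (σ : Equiv.Perm (Fin a)) (ρ : Equiv.Perm (Fin b)) :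
    Equiv.Perm (Fin n) :=
  permOfWord n (joinWord a n (pval σ) (pval ρ))

noncomputable def leftPart (π : Equiv.Perm (Fin n)) (a : ℕ) : Equiv.Perm (Fin a) :=
  permOfWord a (pval π)

noncomputable def rightPart (π : Equiv.Perm (Fin n)) (a b : ℕ) : Equiv.Perm (Fin b) :=
  permOfWord b fun j => pval π (a + 1 + j) - a

lemma isMaxJoin_maxJoin (h : a + b + 1 = n) (σ : Equiv.Perm (Fin a)) (ρ : Equiv.Perm (Fin b)) :
    IsMaxJoin (maxJoin n σ ρ) σ ρ := by
  have bounds : ∀ i, 1 ≤ i → i ≤ n → (i ≤ a → 1 ≤ pval σ i ∧ pval σ i ≤ a) ∧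
      (a + 1 < i → 1 ≤ pval ρ (i - (a + 1)) ∧ pval ρ (i - (a + 1)) ≤ b) := fun i h1 h2 =>
    ⟨fun hi => ⟨one_le_pval σ h1 hi, pval_le σ i⟩,
      fun hi => ⟨one_le_pval ρ (by omega) (by omega), pval_le ρ _⟩⟩
  have hmaps : Set.MapsTo (joinWord a n (pval σ) (pval ρ)) (Set.Icc 1 n) (Set.Icc 1 n) := by
    rintro i ⟨h1, h2⟩
    have := bounds i h1 h2
    simp only [joinWord, Set.mem_Icc]
    split_ifs <;> omega
  have hinj : Set.InjOn (joinWord a n (pval σ) (pval ρ)) (Set.Icc 1 n) := by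
    rintro i ⟨hi1, hi2⟩ j ⟨hj1, hj2⟩ hij
    have := bounds i hi1 hi2
    have := bounds j hj1 hj2
    simp only [joinWord] at hij
    split_ifs at hij <;> try omega
    · exact pval_inj σ hi1 ‹i ≤ a› hj1 ‹j ≤ a› hij
    · have := pval_inj ρ (i := i - (a + 1)) (j := j - (a + 1)) (by omega) (by omega) (by omega)
        (by omega) (by omega)
      omega
  refine ⟨h, fun i h1 h2 => ?_, ?_, fun j h1 h2 => ?_⟩ <;>
    rw [maxJoin, pval_permOfWord hmaps hinj (by omega) (by omega), joinWord]
  · simp [h2]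
  · simp
  · simp only [show ¬ a + 1 + j ≤ a by omega, show a + 1 + j ≠ a + 1 by omega, if_false,
      Nat.add_sub_cancel_left]

namespace IsMaxJoin

variable {π : Equiv.Perm (Fin n)} {σ : Equiv.Perm (Fin a)} {ρ : Equiv.Perm (Fin b)}

lemma leftPart_eq (H : IsMaxJoin π σ ρ) : leftPart π a = σ := by
  have hmaps : Set.MapsTo (pval π) (Set.Icc 1 a) (Set.Icc 1 a) := by
    rintro i ⟨h1, h2⟩
    rw [H.left i h1 h2]
    exact ⟨one_le_pval σ h1 h2, pval_le σ i⟩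
  have hinj : Set.InjOn (pval π) (Set.Icc 1 a) := by
    rintro i ⟨hi1, hi2⟩ j ⟨hj1, hj2⟩ hij
    rw [H.left i hi1 hi2, H.left j hj1 hj2] at hij
    exact pval_inj σ hi1 hi2 hj1 hj2 hij
  exact perm_eq_of_pval_eq fun i h1 h2 => by
    rw [leftPart, pval_permOfWord hmaps hinj h1 h2, H.left i h1 h2]

lemma rightPart_eq (H : IsMaxJoin π σ ρ) : rightPart π a b = ρ := by
  have hval : ∀ j ∈ Set.Icc 1 b, pval π (a + 1 + j) - a = pval ρ j := by
    rintro j ⟨h1, h2⟩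
    rw [H.right j h1 h2, Nat.add_sub_cancel_left]
  have hmaps : Set.MapsTo (fun j => pval π (a + 1 + j) - a) (Set.Icc 1 b) (Set.Icc 1 b) :=
    fun j hj => by
      simp only [hval j hj]
      exact ⟨one_le_pval ρ hj.1 hj.2, pval_le ρ j⟩
  have hinj : Set.InjOn (fun j => pval π (a + 1 + j) - a) (Set.Icc 1 b) :=
    fun i hi j hj hij => by
      simp only [hval i hi, hval j hj] at hij
      exact pval_inj ρ hi.1 hi.2 hj.1 hj.2 hij
  exact perm_eq_of_pval_eq fun j h1 h2 => by
    rw [rightPart, pval_permOfWord hmaps hinj h1 h2, hval j ⟨h1, h2⟩]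

lemma maxJoin_eq (H : IsMaxJoin π σ ρ) : maxJoin n σ ρ = π :=
  (isMaxJoin_maxJoin H.size_eq σ ρ).unique H

lemma has231_iff (H : IsMaxJoin π σ ρ) : Has231 π ↔ Has231 σ ∨ Has231 ρ := by
  have hn := H.size_eq
  constructor
  · rintro ⟨i, j, k, hi, hij, hjk, hkn, hki, hij'⟩
    have hπj := pval_le π j
    rcases lt_trichotomy i (a + 1) with hia | rfl | hia
    · have hπi := H.pval_le_of_le (i := i) (by omega)
      have hka : k ≤ a := by
        by_contra hk
        rcases (show k = a + 1 ∨ a + 1 < k by omega) with rfl | hk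
        · rw [H.max] at hki; omega
        · have := H.lt_pval_of_lt hk hkn; omega
      rw [H.left i hi (by omega), H.left k (by omega) hka] at hki
      rw [H.left i hi (by omega), H.left j (by omega) (by omega)] at hij'
      exact Or.inl ⟨i, j, k, hi, hij, hjk, hka, hki, hij'⟩
    · rw [H.max] at hij'; omega
    · obtain ⟨i', rfl⟩ : ∃ i', i = a + 1 + i' := ⟨i - (a + 1), by omega⟩
      obtain ⟨j', rfl⟩ : ∃ j', j = a + 1 + j' := ⟨j - (a + 1), by omega⟩
      obtain ⟨k', rfl⟩ : ∃ k', k = a + 1 + k' := ⟨k - (a + 1), by omega⟩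
      have := H.right i' (by omega) (by omega)
      have := H.right j' (by omega) (by omega)
      have := H.right k' (by omega) (by omega)
      exact Or.inr ⟨i', j', k', by omega, by omega, by omega, by omega, by omega, by omega⟩
  · rintro (⟨i, j, k, hi, hij, hjk, hka, hki, hij'⟩ | ⟨i, j, k, hi, hij, hjk, hkb, hki, hij'⟩)
    · refine ⟨i, j, k, hi, hij, hjk, by omega, ?_⟩
      rw [H.left i hi (by omega), H.left j (by omega) (by omega), H.left k (by omega) hka]
      exact ⟨hki, hij'⟩
    · refine ⟨a + 1 + i, a + 1 + j, a + 1 + k, by omega, by omega, by omega, by omega, ?_⟩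
      rw [H.right i hi (by omega), H.right j (by omega) (by omega), H.right k (by omega) hkb]
      omega

end IsMaxJoin

section Decomposition

variable {π : Equiv.Perm (Fin n)}

lemma card_le_card_of_pval_mem {V P : Finset ℕ} (hV : V ⊆ Icc 1 n)
    (hP : ∀ i, 1 ≤ i → i ≤ n → pval π i ∈ V → i ∈ P) : V.card ≤ P.card := by
  refine card_le_card_of_injOn (pval π⁻¹) (fun u hu => ?_) (fun u hu v hv huv => ?_)
  · obtain ⟨hu1, hu2⟩ := mem_Icc.1 (hV hu)
    have hi := (pval_inv_eq_iff π (one_le_pval π⁻¹ hu1 hu2) (pval_le _ _) hu1 hu2).1 rfl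
    exact hP _ (one_le_pval π⁻¹ hu1 hu2) (pval_le _ _) (by rw [hi]; exact hu)
  · obtain ⟨hu1, hu2⟩ := mem_Icc.1 (hV hu)
    obtain ⟨hv1, hv2⟩ := mem_Icc.1 (hV hv)
    have hu' := (pval_inv_eq_iff π (one_le_pval π⁻¹ hu1 hu2) (pval_le _ _) hu1 hu2).1 rfl
    have hv' := (pval_inv_eq_iff π (one_le_pval π⁻¹ hv1 hv2) (pval_le _ _) hv1 hv2).1 rfl
    rw [← hu', ← hv', huv]

lemma pval_lt_pval_of_le_of_lt (hπ : ¬ Has231 π) (hmax : pval π (a + 1) = n) {i k : ℕ}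
    (hi1 : 1 ≤ i) (hia : i ≤ a) (hk : a + 1 < k) (hkn : k ≤ n) : pval π i < pval π k := by
  have hne := pval_inj π (i := i) (j := a + 1) hi1 (by omega) (by omega) (by omega)
  have hne' := pval_inj π (i := i) (j := k) hi1 (by omega) (by omega) hkn
  have := pval_le π i
  by_contra hle
  exact hπ ⟨i, a + 1, k, hi1, by omega, hk, hkn, by omega, by omega⟩

/-- The values `1, …, pval π i` all sit left of `n`, so there are at most `a` of them. -/
lemma pval_le_of_not_has231 (hπ : ¬ Has231 π) (han : a < n) (hmax : pval π (a + 1) = n) {i : ℕ}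
    (hi1 : 1 ≤ i) (hia : i ≤ a) : pval π i ≤ a := by
  have hne := pval_inj π (i := i) (j := a + 1) hi1 (by omega)
  have := card_le_card_of_pval_mem (π := π) (V := Icc 1 (pval π i)) (P := Icc 1 a)
    (fun u hu => by have := pval_le π i; simp only [mem_Icc] at hu ⊢; omega)
    (fun p hp1 hpn hp => by
      have := pval_le π i
      simp only [mem_Icc] at hp ⊢
      by_contra hpa
      rcases (show p = a + 1 ∨ a + 1 < p by omega) with rfl | hp'
      · have := hne (by omega) (by omega); omega
      · have := pval_lt_pval_of_le_of_lt hπ hmax hi1 hia hp' hpn; omega)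
  simpa using this

/-- The values `pval π k, …, n` all sit right of position `a`, so there are at most `b + 1`. -/
lemma lt_pval_of_not_has231 (hπ : ¬ Has231 π) (hmax : pval π (a + 1) = n) {k : ℕ} (hk : a + 1 < k)
    (hkn : k ≤ n) : a < pval π k ∧ pval π k < n := by
  have hne := pval_inj π (i := k) (j := a + 1) (by omega) hkn (by omega) (by omega)
  have hcard := card_le_card_of_pval_mem (π := π) (V := Icc (pval π k) n) (P := Icc (a + 1) n)
    (fun u hu => by
      have := one_le_pval π (i := k) (by omega) hkn
      simp only [mem_Icc] at hu ⊢
      omega)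
    (fun p hp1 hpn hp => by
      simp only [mem_Icc] at hp ⊢
      by_contra hpa
      have := pval_lt_pval_of_le_of_lt hπ hmax hp1 (by omega) hk hkn
      omega)
  have := pval_le π k
  rw [Nat.card_Icc, Nat.card_Icc] at hcard
  omega

lemma isMaxJoin_leftPart_rightPart (hπ : ¬ Has231 π) (h : a + b + 1 = n)
    (hmax : pval π (a + 1) = n) :
    IsMaxJoin π (leftPart π a) (rightPart π a b) := by
  have hmapsL : Set.MapsTo (pval π) (Set.Icc 1 a) (Set.Icc 1 a) := fun i ⟨h1, h2⟩ =>
    ⟨one_le_pval π h1 (by omega), pval_le_of_not_has231 hπ (by omega) hmax h1 h2⟩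
  have hinjL : Set.InjOn (pval π) (Set.Icc 1 a) := fun i ⟨hi1, hi2⟩ j ⟨hj1, hj2⟩ hij =>
    pval_inj π hi1 (by omega) hj1 (by omega) hij
  have hright : ∀ j, 1 ≤ j → j ≤ b → a < pval π (a + 1 + j) ∧ pval π (a + 1 + j) < n :=
    fun j h1 h2 => lt_pval_of_not_has231 hπ hmax (by omega) (by omega)
  have hmapsR : Set.MapsTo (fun j => pval π (a + 1 + j) - a) (Set.Icc 1 b) (Set.Icc 1 b) :=
    fun j hj => by have := hright j hj.1 hj.2; simp only [Set.mem_Icc]; omega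
  have hinjR : Set.InjOn (fun j => pval π (a + 1 + j) - a) (Set.Icc 1 b) :=
      fun i ⟨hi1, hi2⟩ j ⟨hj1, hj2⟩ hij => by
    have := hright i hi1 hi2
    have := hright j hj1 hj2
    have := pval_inj π (i := a + 1 + i) (j := a + 1 + j) (by omega) (by omega) (by omega)
      (by omega) (by simp only at hij; omega)
    omega
  refine ⟨h, fun i h1 h2 => ?_, hmax, fun j h1 h2 => ?_⟩
  · rw [leftPart, pval_permOfWord hmapsL hinjL h1 h2]
  · rw [rightPart, pval_permOfWord hmapsR hinjR h1 h2]
    have := hright j h1 h2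
    omega

end Decomposition

namespace IsMaxJoin

variable {π : Equiv.Perm (Fin n)} {σ : Equiv.Perm (Fin a)} {ρ : Equiv.Perm (Fin b)}

lemma pval_right_succ (H : IsMaxJoin π σ ρ) (j : ℕ) :
    (j < b → pval π (a + 1 + j + 1) = a + pval ρ (j + 1)) ∧
      (j = b → pval π (a + 1 + j + 1) = 0 ∧ pval ρ (j + 1) = 0) := by
  have := H.size_eq
  refine ⟨fun hj => ?_, fun hj => ⟨pval_of_out π (Or.inr (by omega)),
    pval_of_out ρ (Or.inr (by omega))⟩⟩
  rw [add_assoc (a + 1) j 1, H.right (j + 1) (by omega) hj]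

lemma desStat_eq (H : IsMaxJoin π σ ρ) :
    desStat π = desStat σ + desStat ρ + if b = 0 then 0 else 1 := by
  have hn := H.size_eq
  simp only [desStat_eq_card, card_filter]
  rw [sum_Icc_one_split hn]
  have hleft : ∀ i ∈ Icc 1 a, (if i < n ∧ pval π (i + 1) < pval π i then 1 else 0) =
      if i < a ∧ pval σ (i + 1) < pval σ i then 1 else 0 := fun i hi => by
    obtain ⟨h1, h2⟩ := mem_Icc.1 hi
    have := H.left i h1 h2
    rcases h2.lt_or_eq with hia | rfl
    · have := H.left (i + 1) (by omega) hia
      split_ifs <;> omega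
    · have := H.max
      have := pval_le π i
      split_ifs <;> omega
  have hmid : (if a + 1 < n ∧ pval π (a + 1 + 1) < pval π (a + 1) then 1 else 0) =
      if b = 0 then 0 else 1 := by
    have := H.max
    rcases Nat.eq_zero_or_pos b with hb | hb
    · split_ifs <;> omega
    · have := H.lt_pval_of_lt (i := a + 1 + 1) (by omega) (by omega)
      split_ifs <;> omega
  have hright : ∀ j ∈ Icc 1 b,
      (if a + 1 + j < n ∧ pval π (a + 1 + j + 1) < pval π (a + 1 + j) then 1 else 0) =
        if j < b ∧ pval ρ (j + 1) < pval ρ j then 1 else 0 := fun j hj => by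
    obtain ⟨h1, h2⟩ := mem_Icc.1 hj
    have := H.right j h1 h2
    have := H.pval_right_succ j
    split_ifs <;> omega
  rw [sum_congr rfl hleft, hmid, sum_congr rfl hright]
  ring

lemma sum_ind13_2_left (H : IsMaxJoin π σ ρ) {i : ℕ} (h1 : 1 ≤ i) (h2 : i ≤ a) :
    ∑ j ∈ Icc 1 n, ind13_2 π i j = ∑ j ∈ Icc 1 a, ind13_2 σ i j + if i = a then b else 0 := by
  have hn := H.size_eq
  have hπi := H.left i h1 h2
  have hnext : (i < a ∧ pval π (i + 1) = pval σ (i + 1) ∧ pval π (i + 1) ≤ a) ∨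
      (i = a ∧ pval π (i + 1) = n ∧ pval σ (i + 1) = 0) := by
    rcases h2.lt_or_eq with hia | rfl
    · exact Or.inl ⟨hia, H.left (i + 1) (by omega) hia, H.pval_le_of_le hia⟩
    · exact Or.inr ⟨rfl, H.max, pval_of_out σ (Or.inr (by omega))⟩
  have hleft : ∀ j ∈ Icc 1 a, ind13_2 π i j = ind13_2 σ i j := fun j hj => by
    obtain ⟨hj1, hj2⟩ := mem_Icc.1 hj
    have := H.left j hj1 hj2
    unfold ind13_2
    split_ifs <;> omega
  have hmid : ind13_2 π i (a + 1) = 0 := by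
    have := H.max
    have := pval_le π (i + 1)
    unfold ind13_2
    split_ifs <;> omega
  have hright : ∀ j ∈ Icc 1 b, ind13_2 π i (a + 1 + j) = if i = a then 1 else 0 := fun j hj => by
    obtain ⟨hj1, hj2⟩ := mem_Icc.1 hj
    have := H.lt_pval_of_lt (i := a + 1 + j) (by omega) (by omega)
    have := H.pval_le_of_le h2
    unfold ind13_2
    split_ifs <;> omega
  rw [sum_Icc_one_split hn, sum_congr rfl hleft, hmid, sum_congr rfl hright]
  split_ifs <;> simp

lemma sum_ind13_2_max (H : IsMaxJoin π σ ρ) : ∑ j ∈ Icc 1 n, ind13_2 π (a + 1) j = 0 :=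
  sum_eq_zero fun j _ => by
    have := H.max
    have := pval_le π j
    unfold ind13_2
    split_ifs <;> omega

lemma sum_ind13_2_right (H : IsMaxJoin π σ ρ) {i : ℕ} (h1 : 1 ≤ i) (h2 : i ≤ b) :
    ∑ j ∈ Icc 1 n, ind13_2 π (a + 1 + i) j = ∑ j ∈ Icc 1 b, ind13_2 ρ i j := by
  have hn := H.size_eq
  have hπi := H.right i h1 h2
  have hnext := H.pval_right_succ i
  have hleft : ∀ j ∈ Icc 1 a, ind13_2 π (a + 1 + i) j = 0 := fun j hj => by
    have := (mem_Icc.1 hj).2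
    unfold ind13_2
    split_ifs <;> omega
  have hmid : ind13_2 π (a + 1 + i) (a + 1) = 0 := by
    unfold ind13_2
    split_ifs <;> omega
  have hright : ∀ j ∈ Icc 1 b, ind13_2 π (a + 1 + i) (a + 1 + j) = ind13_2 ρ i j := fun j hj => by
    obtain ⟨hj1, hj2⟩ := mem_Icc.1 hj
    have := H.right j hj1 hj2
    unfold ind13_2
    split_ifs <;> omega
  rw [sum_Icc_one_split hn, sum_eq_zero hleft, hmid, sum_congr rfl hright, zero_add, zero_add]

lemma v13_2_eq (H : IsMaxJoin π σ ρ) :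
    v13_2 π = v13_2 σ + v13_2 ρ + if a = 0 then 0 else b := by
  rw [v13_2_eq_sum, v13_2_eq_sum σ, v13_2_eq_sum ρ, sum_Icc_one_split H.size_eq,
    sum_congr rfl fun i hi => H.sum_ind13_2_left (mem_Icc.1 hi).1 (mem_Icc.1 hi).2,
    H.sum_ind13_2_max,
    sum_congr rfl fun i hi => H.sum_ind13_2_right (mem_Icc.1 hi).1 (mem_Icc.1 hi).2,
    sum_add_distrib, sum_ite_eq']
  simp only [mem_Icc, le_refl, and_true]
  split_ifs <;> omega

lemma noDD_iff (H : IsMaxJoin π σ ρ) :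
    noDD (n + 1) π ↔ noDD (a + 1) σ ∧ (a = 0 → b = 0) ∧ noDD (b + 1) ρ := by
  have hn := H.size_eq
  rw [noDD_succ_iff, noDD_succ_iff, noDD_succ_iff, forall_Icc_one_split hn]
  refine and_congr (forall_congr' fun i => forall_congr' fun h1 => forall_congr' fun h2 => ?_)
    (and_congr ?_ (forall_congr' fun j => forall_congr' fun h1 => forall_congr' fun h2 => ?_))
  · have := H.left i h1 h2
    have : 1 < i → pval π (i - 1) = pval σ (i - 1) := fun h => H.left (i - 1) (by omega) (by omega)
    rcases h2.lt_or_eq with hia | rfl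
    · have := H.left (i + 1) (by omega) hia
      omega
    · have := H.max
      have := pval_le π i
      omega
  · rw [Nat.add_sub_cancel, H.max]
    have := H.pval_le_of_le (le_refl a)
    rcases Nat.eq_zero_or_pos b with hb | hb
    · omega
    · have := H.lt_pval_of_lt (i := a + 1 + 1) (by omega) (by omega)
      omega
  · have := H.right j h1 h2
    have := H.pval_right_succ j
    have := pval_le ρ j
    rcases (show j = 1 ∨ 1 < j by omega) with rfl | hj
    · rw [Nat.add_sub_cancel, H.max]
      omega
    · rw [show a + 1 + j - 1 = a + 1 + (j - 1) by omega, H.right (j - 1) (by omega) (by omega)]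
      omega

end IsMaxJoin

lemma sum_avoiders231_eq_sum_maxJoin {M : Type*} [AddCommMonoid M] (hn : 1 ≤ n)
    (F : Equiv.Perm (Fin n) → M) :
    ∑ π ∈ avoiders231 n, F π =
      ∑ a ∈ range n, ∑ x ∈ avoiders231 a ×ˢ avoiders231 (n - 1 - a), F (maxJoin n x.1 x.2) := by
  -- the fibre over `a` consists of the permutations with `n` at position `a + 1`
  rw [← sum_fiberwise_of_maps_to (g := fun π => pval π⁻¹ n - 1) (t := range n) fun π _ => by
    have := pval_le π⁻¹ n; rw [mem_range]; omega]
  refine sum_congr rfl fun a ha => ?_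
  have hab : a + (n - 1 - a) + 1 = n := by rw [mem_range] at ha; omega
  have hfiber : ∀ π : Equiv.Perm (Fin n), π ∈ {π ∈ avoiders231 n | pval π⁻¹ n - 1 = a} ↔
      ¬ Has231 π ∧ pval π (a + 1) = n := fun π => by
    rw [mem_filter, mem_avoiders231, ← pval_inv_eq_iff π (by omega) (by omega) hn le_rfl]
    have := one_le_pval π⁻¹ hn le_rfl
    exact and_congr_right fun _ => by omega
  refine sum_nbij' (fun π => (leftPart π a, rightPart π a (n - 1 - a)))
    (fun x => maxJoin n x.1 x.2) (fun π hπ => ?_) (fun x hx => ?_) (fun π hπ => ?_)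
    (fun x _ => ?_) (fun π hπ => ?_)
  · obtain ⟨h231, hmax⟩ := (hfiber π).1 hπ
    rw [(isMaxJoin_leftPart_rightPart h231 hab hmax).has231_iff, not_or] at h231
    simpa only [mem_product, mem_avoiders231] using h231
  · rw [mem_product, mem_avoiders231, mem_avoiders231] at hx
    have H := isMaxJoin_maxJoin hab x.1 x.2
    exact (hfiber _).2 ⟨by rw [H.has231_iff]; tauto, H.max⟩
  · obtain ⟨h231, hmax⟩ := (hfiber π).1 hπ
    exact (isMaxJoin_leftPart_rightPart h231 hab hmax).maxJoin_eq
  · have H := isMaxJoin_maxJoin hab x.1 x.2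
    simp only [H.leftPart_eq, H.rightPart_eq]
  · obtain ⟨h231, hmax⟩ := (hfiber π).1 hπ
    rw [(isMaxJoin_leftPart_rightPart h231 hab hmax).maxJoin_eq]

lemma sum_avoiders231_eq_sum_mul {R : Type*} [CommSemiring R] (F : ∀ m, Equiv.Perm (Fin m) → R)
    (c : ℕ → ℕ → R)
    (hF : ∀ {a b m : ℕ} {π : Equiv.Perm (Fin m)} {σ : Equiv.Perm (Fin a)}
      {ρ : Equiv.Perm (Fin b)}, IsMaxJoin π σ ρ → F m π = c a b * (F a σ * F b ρ))
    (hn : 1 ≤ n) :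
    ∑ π ∈ avoiders231 n, F n π = ∑ a ∈ range n, c a (n - 1 - a) *
      ((∑ σ ∈ avoiders231 a, F a σ) * ∑ ρ ∈ avoiders231 (n - 1 - a), F (n - 1 - a) ρ) := by
  rw [sum_avoiders231_eq_sum_maxJoin hn]
  refine sum_congr rfl fun a ha => ?_
  have hab : a + (n - 1 - a) + 1 = n := by rw [mem_range] at ha; omega
  rw [sum_product, sum_mul_sum, mul_sum]
  refine sum_congr rfl fun σ _ => ?_
  rw [mul_sum]
  exact sum_congr rfl fun ρ _ => hF (isMaxJoin_maxJoin hab σ ρ)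

lemma sum_avoiders231_zero {M : Type*} [AddCommMonoid M] (F : Equiv.Perm (Fin 0) → M) :
    ∑ π ∈ avoiders231 0, F π = F 1 := by
  have : avoiders231 0 = {1} := by
    ext π
    simp only [mem_avoiders231, mem_singleton, Subsingleton.elim π 1, iff_true]
    rintro ⟨i, j, k, hi, hij, hjk, hk, -⟩
    omega
  rw [this, sum_singleton]

end MaxJoin

section Recurrence

variable {R : Type*} [CommSemiring R] (t q : R)

def SatisfiesRec (X : ℕ → R) : Prop :=
  X 0 = 1 ∧ X 1 = 1 ∧ ∀ n, X (n + 2) =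
    (1 + t) * X (n + 1) + t * ∑ a ∈ range n, q ^ (n - a) * (X (a + 1) * X (n - a))

variable {t q}

lemma SatisfiesRec.eq {X Y : ℕ → R} (hX : SatisfiesRec t q X) (hY : SatisfiesRec t q Y) :
    X = Y := by
  funext n
  induction n using Nat.strong_induction_on with
  | _ n ih =>
    match n, ih with
    | 0, _ => rw [hX.1, hY.1]
    | 1, _ => rw [hX.2.1, hY.2.1]
    | n + 2, ih =>
      rw [hX.2.2, hY.2.2, ih (n + 1) (by omega)]
      refine congrArg _ (congrArg _ (sum_congr rfl fun a ha => ?_))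
      rw [mem_range] at ha
      rw [ih (a + 1) (by omega), ih (n - a) (by omega)]

lemma satisfiesRec_of_eq_sum_mul {X : ℕ → R} (c : ℕ → ℕ → R) (h0 : X 0 = 1)
    (hX : ∀ n, 1 ≤ n → X n = ∑ a ∈ range n, c a (n - 1 - a) * (X a * X (n - 1 - a)))
    (hc₀ : c 0 0 = 1) (hc₁ : ∀ m, 1 ≤ m → c 0 m + c m 0 = 1 + t)
    (hc : ∀ a b, 1 ≤ a → 1 ≤ b → c a b = t * q ^ b) :
    SatisfiesRec t q X := by
  refine ⟨h0, by rw [hX 1 le_rfl]; simp [h0, hc₀], fun n => ?_⟩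
  have hmid : ∑ a ∈ range n, c (a + 1) (n + 2 - 1 - (a + 1)) *
      (X (a + 1) * X (n + 2 - 1 - (a + 1))) =
        t * ∑ a ∈ range n, q ^ (n - a) * (X (a + 1) * X (n - a)) := by
    rw [mul_sum]
    refine sum_congr rfl fun a ha => ?_
    rw [mem_range] at ha
    rw [show n + 2 - 1 - (a + 1) = n - a by omega, hc (a + 1) (n - a) (by omega) (by omega),
      mul_assoc]
  rw [hX (n + 2) (by omega), sum_range_succ, sum_range_succ', hmid,
    show n + 2 - 1 - 0 = n + 1 by omega, show n + 2 - 1 - (n + 1) = 0 by omega, h0,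
    ← hc₁ (n + 1) (by omega)]
  ring

end Recurrence

section Weights

variable {R : Type*} [CommSemiring R] (t q : R) {a b n : ℕ}

def desWeight (π : Equiv.Perm (Fin n)) : R := t ^ desStat π * q ^ v13_2 π

noncomputable def gammaWeight (π : Equiv.Perm (Fin n)) : R :=
  if noDD (n + 1) π then t ^ desStat π * (1 + t) ^ (n - 1 - 2 * desStat π) * q ^ v13_2 π else 0

variable {π : Equiv.Perm (Fin n)} {σ : Equiv.Perm (Fin a)} {ρ : Equiv.Perm (Fin b)}

lemma IsMaxJoin.desWeight_eq (H : IsMaxJoin π σ ρ) :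
    desWeight t q π = t ^ (if b = 0 then 0 else 1) * q ^ (if a = 0 then 0 else b) *
      (desWeight t q σ * desWeight t q ρ) := by
  simp only [desWeight, H.desStat_eq, H.v13_2_eq, pow_add]
  ring

lemma IsMaxJoin.gammaWeight_eq (H : IsMaxJoin π σ ρ) :
    gammaWeight t q π = (if a = 0 then (if b = 0 then 1 else 0) else if b = 0 then 1 + t
      else t * q ^ b) * (gammaWeight t q σ * gammaWeight t q ρ) := by
  have hn := H.size_eq
  unfold gammaWeight
  rw [H.noDD_iff]
  by_cases hσ : noDD (a + 1) σ
  swap; · simp [hσ]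
  by_cases hρ : noDD (b + 1) ρ
  swap; · simp [hρ]
  have hdσ := two_mul_desStat_le σ hσ
  have hdρ := two_mul_desStat_le ρ hρ
  have hd := H.desStat_eq
  have hv := H.v13_2_eq
  rcases Nat.eq_zero_or_pos a with rfl | ha <;> rcases Nat.eq_zero_or_pos b with rfl | hb
  · simp only [↓reduceIte, add_zero] at hd hv
    rw [if_pos ⟨hσ, fun _ => rfl, hρ⟩, if_pos hσ, if_pos hρ, hd, hv,
      show desStat σ = 0 by omega, show desStat ρ = 0 by omega, show n - 1 = 0 by omega]
    simp [pow_add]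
  · simp [hσ, hρ, hb.ne']
  · simp only [↓reduceIte, if_neg ha.ne', add_zero] at hd hv
    rw [if_pos ⟨hσ, fun h => absurd h ha.ne', hρ⟩, if_pos hσ, if_pos hρ,
      show n - 1 - 2 * desStat π = (a - 1 - 2 * desStat σ) + 1 by omega, hd, hv,
      show desStat ρ = 0 by omega]
    simp [ha.ne', pow_add]
    ring
  · simp only [if_neg ha.ne', if_neg hb.ne'] at hd hv
    rw [if_pos ⟨hσ, fun h => absurd h ha.ne', hρ⟩, if_pos hσ, if_pos hρ,
      show n - 1 - 2 * desStat π = (a - 1 - 2 * desStat σ) + (b - 1 - 2 * desStat ρ) by omega,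
      hd, hv]
    simp [ha.ne', hb.ne', pow_add]
    ring

lemma satisfiesRec_desWeight :
    SatisfiesRec t q fun n => ∑ π ∈ avoiders231 n, desWeight t q π :=
  satisfiesRec_of_eq_sum_mul
    (fun a b => t ^ (if b = 0 then 0 else 1) * q ^ (if a = 0 then 0 else b))
    (by rw [sum_avoiders231_zero]; simp [desWeight, desStat, v13_2])
    (fun _ hn => sum_avoiders231_eq_sum_mul (fun _ π => desWeight t q π) _
      (fun H => H.desWeight_eq t q) hn)
    (by simp) (fun m hm => by simp [show m ≠ 0 by omega]; ring)
    (fun a b ha hb => by simp [show a ≠ 0 by omega, show b ≠ 0 by omega])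

lemma satisfiesRec_gammaWeight :
    SatisfiesRec t q fun n => ∑ π ∈ avoiders231 n, gammaWeight t q π :=
  satisfiesRec_of_eq_sum_mul
    (fun a b => if a = 0 then (if b = 0 then 1 else 0) else if b = 0 then 1 + t else t * q ^ b)
    (by rw [sum_avoiders231_zero]; simp [gammaWeight, desStat, v13_2, noDD])
    (fun _ hn => sum_avoiders231_eq_sum_mul (fun _ π => gammaWeight t q π) _
      (fun H => H.gammaWeight_eq t q) hn)
    (by simp) (fun m hm => by simp [show m ≠ 0 by omega])
    (fun a b ha hb => by simp [show a ≠ 0 by omega, show b ≠ 0 by omega])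

lemma sum_gammaWeight_eq (n : ℕ) :
    ∑ π ∈ avoiders231 n, gammaWeight t q π = ∑ k ∈ range ((n - 1) / 2 + 1),
      (∑ π ∈ univ.filter (fun π : Equiv.Perm (Fin n) =>
          avoids π ![2, 3, 1] ∧ desStat π = k ∧ noDD (n + 1) π), q ^ v13_2 π) *
        t ^ k * (1 + t) ^ (n - 1 - 2 * k) := by
  simp only [gammaWeight]
  rw [← sum_filter, ← sum_fiberwise_of_maps_to (g := desStat) (t := range ((n - 1) / 2 + 1))
    fun π hπ => by
      have := two_mul_desStat_le π (mem_filter.1 hπ).2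
      rw [mem_range]
      omega]
  refine sum_congr rfl fun k _ => ?_
  rw [sum_mul, sum_mul, filter_filter]
  refine sum_congr (by ext π; simp [avoiders231]; tauto) fun π hπ => ?_
  rw [(mem_filter.1 hπ).2.2.1]
  ring

end Weights

theorem stmt1_general (n : ℕ) :
    (∑ π ∈ Finset.univ.filter (fun π : Equiv.Perm (Fin n) => avoids π ![2,3,1]),
        tP ^ desStat π * qP ^ v13_2 π)
      = ∑ k ∈ Finset.range ((n - 1) / 2 + 1),
          (∑ π ∈ Finset.univ.filter (fun π : Equiv.Perm (Fin n) =>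
              avoids π ![2,3,1] ∧ desStat π = k ∧ noDD (n + 1) π),
            qP ^ v13_2 π) * tP ^ k * (1 + tP) ^ (n - 1 - 2 * k) :=
  (congrFun ((satisfiesRec_desWeight tP qP).eq (satisfiesRec_gammaWeight tP qP)) n).trans
    (sum_gammaWeight_eq tP qP n)

/-- γ-expansion of the (des, 13-2) polynomial over 231-avoiding permutations. -/
theorem stmt1 (n : ℕ) (hn : 1 ≤ n) :
    (∑ π ∈ Finset.univ.filter (fun π : Equiv.Perm (Fin n) => avoids π ![2,3,1]),
        tP ^ desStat π * qP ^ v13_2 π)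
      = ∑ k ∈ Finset.range ((n - 1) / 2 + 1),
          (∑ π ∈ Finset.univ.filter (fun π : Equiv.Perm (Fin n) =>
              avoids π ![2,3,1] ∧ desStat π = k ∧ noDD (n + 1) π),
            qP ^ v13_2 π) * tP ^ k * (1 + tP) ^ (n - 1 - 2 * k) :=
  stmt1_general n
end

section
/- Let n ≥ 1 and π ∈ S_n. If π avoids the pattern 312, then adi π = (2-13)π. If π avoids the pattern 231, then adi* π = (13-2)π. -/
open scoped Classical
open Finset

/-! Avoiding 312 rules out the second clause of admissibility for an inversion `(i, j)`: an `l`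
between them with `π l < π j` would give the 312 `i l j`. So `π j < π (j + 1)`, and then also
`π i < π (j + 1)`, as otherwise `i j (j + 1)` is a 312. Hence `(i, j) ↦ (j, i)` matches admissible
inversions with occurrences of 2-13. Dually, under 231-avoidance a star admissible inversion
`(i, j)` has `π (i - 1) < π i` and `π (i - 1) < π j`, and `(i, j) ↦ (i - 1, j)` matches star
admissible inversions with occurrences of 13-2. -/

section Patterns

variable {n : ℕ} (π : Equiv.Perm (Fin n))

lemma pval_eq {i : ℕ} (h1 : 1 ≤ i) (h2 : i ≤ n) :
    pval π i = (π ⟨i - 1, by omega⟩).val + 1 := by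
  simp [pval, pvalB, h1, h2]

lemma pval_lt_or_gt_of_ne {x y : ℕ} (hx : 1 ≤ x) (hxn : x ≤ n) (hy : 1 ≤ y) (hyn : y ≤ n)
    (hxy : x ≠ y) : pval π x < pval π y ∨ pval π y < pval π x := by
  have hne : π ⟨x - 1, by omega⟩ ≠ π ⟨y - 1, by omega⟩ :=
    π.injective.ne (by simp only [ne_eq, Fin.mk.injEq]; omega)
  rw [pval_eq π hx hxn, pval_eq π hy hyn]
  exact (Fin.lt_or_lt_of_ne hne).imp Nat.succ_lt_succ Nat.succ_lt_succ

lemma not_avoids_of_three {p : Fin 3 → ℕ} {a b c : ℕ}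
    (ha : 1 ≤ a) (hab : a < b) (hbc : b < c) (hc : c ≤ n)
    (h : ∀ x y, p x < p y ↔ pval π (![a, b, c] x) < pval π (![a, b, c] y)) :
    ¬ avoids π p := by
  let f : Fin 3 → Fin n := ![⟨a - 1, by omega⟩, ⟨b - 1, by omega⟩, ⟨c - 1, by omega⟩]
  have hf : StrictMono f := by
    intro x y hxy
    fin_cases x <;> fin_cases y <;> simp_all [f, Fin.lt_def] <;> omega
  have hpval : ∀ x, pval π (![a, b, c] x) = (π (f x)).val + 1 := by
    intro x
    fin_cases x <;> simp only [Fin.zero_eta, Fin.mk_one, Fin.reduceFinMk, Matrix.cons_val, f] <;>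
      rw [pval_eq] <;> omega
  refine not_not_intro ⟨OrderEmbedding.ofStrictMono f hf, fun x y => ?_⟩
  rw [h, hpval, hpval, Nat.add_lt_add_iff_right, ← Fin.lt_def]
  rfl

lemma not_avoids_312 {a b c : ℕ} (ha : 1 ≤ a) (hab : a < b) (hbc : b < c) (hc : c ≤ n)
    (hbc' : pval π b < pval π c) (hca : pval π c < pval π a) :
    ¬ avoids π ![3, 1, 2] := by
  refine not_avoids_of_three π ha hab hbc hc fun x y => ?_
  fin_cases x <;> fin_cases y <;> simp <;> omega

lemma not_avoids_231 {a b c : ℕ} (ha : 1 ≤ a) (hab : a < b) (hbc : b < c) (hc : c ≤ n)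
    (hca : pval π c < pval π a) (hab' : pval π a < pval π b) :
    ¬ avoids π ![2, 3, 1] := by
  refine not_avoids_of_three π ha hab hbc hc fun x y => ?_
  fin_cases x <;> fin_cases y <;> simp <;> omega

end Patterns

section AdmissibleInversions

variable {n : ℕ} {π : Equiv.Perm (Fin n)}

lemma adiStat_eq_v2_13_of_avoids (hav : avoids π ![3, 1, 2]) : adiStat π = v2_13 π := by
  unfold adiStat v2_13
  refine card_nbij' Prod.swap Prod.swap ?_ ?_ (fun _ _ => rfl) (fun _ _ => rfl)
  · rintro ⟨i, j⟩ h
    simp only [coe_filter, mem_product, mem_Icc, Set.mem_ofPred_eq, Prod.swap_prod_mk] at h ⊢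
    obtain ⟨⟨⟨hi, hin⟩, hj, hjn⟩, hij, hji, hadm⟩ := h
    obtain ⟨hjn', hj_asc⟩ : j < n ∧ pval π j < pval π (j + 1) := hadm.resolve_right
      fun ⟨l, hil, hlj, hl⟩ => not_avoids_312 π hi hil hlj hjn hl hji hav
    have hi_lt : pval π i < pval π (j + 1) :=
      (pval_lt_or_gt_of_ne π hi hin (by omega) hjn' (by omega)).resolve_right
        fun h => not_avoids_312 π hi hij (by omega) hjn' hj_asc h hav
    exact ⟨⟨⟨hj, by omega⟩, hi, by omega⟩, hij, hji, hi_lt⟩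
  · rintro ⟨j, i⟩ h
    simp only [coe_filter, mem_product, mem_Icc, Set.mem_ofPred_eq, Prod.swap_prod_mk] at h ⊢
    obtain ⟨⟨⟨hj, hjn⟩, hi, hin⟩, hij, hji, hi_lt⟩ := h
    exact ⟨⟨⟨hi, by omega⟩, hj, by omega⟩, hij, hji, .inl ⟨by omega, hji.trans hi_lt⟩⟩

lemma adiStarStat_eq_v13_2_of_avoids (hav : avoids π ![2, 3, 1]) :
    adiStarStat π = v13_2 π := by
  unfold adiStarStat v13_2
  refine card_nbij' (fun p => (p.1 - 1, p.2)) (fun p => (p.1 + 1, p.2)) ?_ ?_ ?_ ?_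
  · rintro ⟨i, j⟩ h
    simp only [coe_filter, mem_product, mem_Icc, Set.mem_ofPred_eq] at h ⊢
    obtain ⟨⟨⟨hi, hin⟩, hj, hjn⟩, hij, hji, hadm⟩ := h
    obtain ⟨hi', hi_asc⟩ : 1 < i ∧ pval π (i - 1) < pval π i := hadm.resolve_right
      fun ⟨l, hil, hlj, hl⟩ => not_avoids_231 π hi hil hlj hjn hji hl hav
    have hj_gt : pval π (i - 1) < pval π j :=
      (pval_lt_or_gt_of_ne π (by omega) (by omega) hj hjn (by omega)).resolve_right
        fun h => not_avoids_231 π (by omega) (by omega) hij hjn h hi_asc hav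
    rw [Nat.sub_add_cancel hi]
    exact ⟨⟨⟨by omega, by omega⟩, hj, hjn⟩, by omega, hj_gt, hji⟩
  · rintro ⟨i, j⟩ h
    simp only [coe_filter, mem_product, mem_Icc, Set.mem_ofPred_eq] at h ⊢
    obtain ⟨⟨⟨hi, hin⟩, hj, hjn⟩, hij, hi_lt, hji⟩ := h
    rw [Nat.add_sub_cancel]
    exact ⟨⟨⟨by omega, by omega⟩, hj, hjn⟩, by omega, hji, .inl ⟨by omega, hi_lt.trans hji⟩⟩
  · rintro ⟨i, j⟩ h
    simp only [coe_filter, mem_product, mem_Icc, Set.mem_ofPred_eq] at h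
    simp only [Prod.mk.injEq, and_true]
    omega
  · rintro ⟨i, j⟩ -
    simp

end AdmissibleInversions

theorem stmt8_general (n : ℕ) (π : Equiv.Perm (Fin n)) :
    (avoids π ![3,1,2] → adiStat π = v2_13 π) ∧
    (avoids π ![2,3,1] → adiStarStat π = v13_2 π) :=
  ⟨adiStat_eq_v2_13_of_avoids, adiStarStat_eq_v13_2_of_avoids⟩

/-- admissible inversions as vincular pattern counts. -/
theorem stmt8 (n : ℕ) (hn : 1 ≤ n) (π : Equiv.Perm (Fin n)) :
    (avoids π ![3,1,2] → adiStat π = v2_13 π) ∧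
    (avoids π ![2,3,1] → adiStarStat π = v13_2 π) :=
  stmt8_general n π
end

section
/- If π ∈ S_{2n+1} is a down-up permutation (π(1) > π(2) < π(3) > π(4) < ⋯), then every inversion of π is admissible, i.e. adi π = inv π. Moreover, for every π ∈ T_{2n+1,n}(213): (1) adi π + adi π^r = 2n² + n; (2) adi π = 2 · (3-12)π; (3) adi π^r = (31-2)π, where π^r is the reverse of π, defined by π^r(i) = π(2n+2−i). -/
open scoped Classical
open Finset

/-!
For a down-up permutation of odd length every inversion `(i, j)` is admissible: an even `j` is
followed by an ascent, and for an odd `j` the position `j - 1` satisfies `π(j-1) < π(j) < π(i)`.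

A permutation of length `2n + 1` with `n` descents and no double descent (with zero boundary
values) has its descents at pairwise non-adjacent positions of `[1, 2n - 1]`, which forces them to
be the odd positions: it is down-up, and so is its reverse. Hence `adi = inv` for both, and
`inv π + inv πʳ = C(2n+1, 2)`. Avoiding `213` then gives two facts. An inversion ending at an
ascent bottom `j` persists to `j + 1`, so the inversions ending at `2k` and those ending at
`2k + 1` are both in bijection with the `3-12` occurrences `(i, 2k)`. After a descent at `i`
every later value lies below `π(i)`, so the non-inversions `(i + 1, j)` of `π`, i.e. the
inversions of `πʳ`, are exactly the `31-2` occurrences `(i, j)`.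
-/

section PermValues

variable {N : ℕ} (π : Equiv.Perm (Fin N)) {i j : ℕ}

lemma pval_of_mem (h1 : 1 ≤ i) (h2 : i ≤ N) : pval π i = (π ⟨i - 1, by omega⟩).val + 1 := by
  simp only [pval, pvalB, dif_pos (And.intro h1 h2)]

lemma pval_of_lt (h : N < i) : pval π i = 0 := by
  simp only [pval, pvalB, dif_neg (show ¬(1 ≤ i ∧ i ≤ N) by omega)]

lemma pval_pos (h1 : 1 ≤ i) (h2 : i ≤ N) : 0 < pval π i := by
  rw [pval_of_mem π h1 h2]; omega

lemma pval_ne (hi1 : 1 ≤ i) (hi2 : i ≤ N) (hj1 : 1 ≤ j) (hj2 : j ≤ N) (hij : i ≠ j) :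
    pval π i ≠ pval π j := by
  rw [pval_of_mem π hi1 hi2, pval_of_mem π hj1 hj2, Ne, add_left_inj, ← Fin.ext_iff,
    π.injective.eq_iff, Fin.mk.injEq]
  omega

lemma pval_reverseP (h1 : 1 ≤ i) (h2 : i ≤ N) : pval (reverseP π) i = pval π (N + 1 - i) := by
  rw [pval_of_mem _ h1 h2, pval_of_mem π (by omega) (by omega)]
  show (π (Fin.rev _)).val + 1 = _
  congr 3
  ext
  simp only [Fin.val_rev]
  omega

lemma not_pattern213 (hπ : avoids π ![2, 1, 3]) {a b c : ℕ} (ha : 1 ≤ a) (hab : a < b)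
    (hbc : b < c) (hc : c ≤ N) : ¬ (pval π b < pval π a ∧ pval π a < pval π c) := by
  rintro ⟨hba, hac⟩
  rw [pval_of_mem π ha (by omega), pval_of_mem π (i := b) (by omega) (by omega),
    pval_of_mem π (i := c) (by omega) hc] at *
  set f : Fin 3 → Fin N := ![⟨a - 1, by omega⟩, ⟨b - 1, by omega⟩, ⟨c - 1, by omega⟩]
  have hf : StrictMono f := Fin.strictMono_iff_lt_succ.2 fun k => by
    fin_cases k <;> simp [f, Fin.lt_def] <;> omega
  refine hπ ⟨OrderEmbedding.ofStrictMono f hf, fun x y => ?_⟩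
  fin_cases x <;> fin_cases y <;> simp [f] <;> simp only [Fin.le_def, Fin.lt_def] <;> omega

lemma pval_lt_of_descent (hπ : avoids π ![2, 1, 3]) (hi : 1 ≤ i) (hdes : pval π (i + 1) < pval π i)
    (hij : i < j) (hj : j ≤ N) : pval π j < pval π i := by
  rcases (show j = i + 1 ∨ i + 1 < j by omega) with rfl | hj'
  · exact hdes
  · have := pval_ne π hi (by omega) (by omega) hj (by omega : i ≠ j)
    have := not_pattern213 π hπ hi (by omega) hj' hj
    omega

lemma pval_succ_lt_of_inversion (hπ : avoids π ![2, 1, 3]) (hi : 1 ≤ i) (hij : i < j)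
    (hj : j + 1 ≤ N) (hinv : pval π j < pval π i) :
    pval π (j + 1) < pval π i := by
  have := pval_ne π hi (by omega) (by omega) hj (by omega : i ≠ j + 1)
  have := not_pattern213 π hπ hi hij (by omega) hj
  omega

end PermValues

section NoConsecutive

lemma Finset.card_le_of_succ_notMem {S : Finset ℕ} {a b : ℕ} (hS : S ⊆ Icc a b)
    (hsucc : ∀ i ∈ S, i + 1 ∉ S) : #S ≤ (b + 2 - a) / 2 := by
  rw [← Finset.card_range ((b + 2 - a) / 2)]
  refine Finset.card_le_card_of_injOn (fun i => (i - a) / 2) (fun i hi => ?_) fun i hi j hj hij => ?_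
  · have := mem_Icc.1 (hS hi)
    simp only [coe_range, Set.mem_Iio]
    omega
  · have hi' := mem_Icc.1 (hS hi)
    have hj' := mem_Icc.1 (hS hj)
    simp only at hij
    by_contra hne
    rcases (show j = i + 1 ∨ i = j + 1 by omega) with rfl | rfl
    · exact hsucc i hi hj
    · exact hsucc j hj hi

lemma Finset.eq_filter_odd_of_succ_notMem {S : Finset ℕ} {n : ℕ} (hS : S ⊆ Icc 1 (2 * n - 1))
    (hsucc : ∀ i ∈ S, i + 1 ∉ S) (hcard : #S = n) : S = (Icc 1 (2 * n)).filter (· % 2 = 1) := by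
  have hodd : ∀ i ∈ S, i % 2 = 1 := by
    intro i hi
    by_contra heven
    have hi' := mem_Icc.1 (hS hi)
    have hlow := card_le_of_succ_notMem (S := S.filter (· < i)) (a := 1) (b := i - 2)
      (fun k hk => by
        obtain ⟨hkS, hki⟩ := mem_filter.1 hk
        have := mem_Icc.1 (hS hkS)
        have : k ≠ i - 1 := fun h => hsucc k hkS (by rwa [h, Nat.sub_add_cancel (by omega)])
        exact mem_Icc.2 ⟨by omega, by omega⟩)
      fun k hk => by simp only [mem_filter] at hk ⊢; exact fun h => hsucc k hk.1 h.1
    have hhigh := card_le_of_succ_notMem (S := S.filter (i ≤ ·)) (a := i) (b := 2 * n - 1)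
      (fun k hk => mem_Icc.2 ⟨(mem_filter.1 hk).2, (mem_Icc.1 (hS (mem_filter.1 hk).1)).2⟩)
      fun k hk => by simp only [mem_filter] at hk ⊢; exact fun h => hsucc k hk.1 h.1
    have hsplit := card_filter_add_card_filter_not (s := S) (· < i)
    simp only [not_lt] at hsplit
    omega
  have hS' : S ⊆ (Icc 1 (2 * n)).filter (· % 2 = 1) := fun i hi =>
    mem_filter.2 ⟨Icc_subset_Icc_right (by omega) (hS hi), hodd i hi⟩
  refine eq_of_subset_of_card_le hS' ?_
  rw [hcard]
  refine (card_le_of_succ_notMem (a := 1) (b := 2 * n - 1) (fun i hi => ?_) ?_).trans (by omega)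
  · simp only [mem_filter, mem_Icc] at hi
    exact mem_Icc.2 ⟨hi.1.1, by omega⟩
  · intro i hi
    simp only [mem_filter] at hi ⊢
    omega

end NoConsecutive

section DownUp

variable {N : ℕ} {π : Equiv.Perm (Fin N)} {i : ℕ}

lemma isDownUp.pval_succ_lt (h : isDownUp π) (hi : 1 ≤ i) (hiN : i + 1 ≤ N) (hodd : i % 2 = 1) :
    pval π (i + 1) < pval π i :=
  (h i hi hiN).1 (Nat.odd_iff.2 hodd)

lemma isDownUp.lt_pval_succ (h : isDownUp π) (hi : 1 ≤ i) (hiN : i + 1 ≤ N) (heven : i % 2 = 0) :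
    pval π i < pval π (i + 1) :=
  (h i hi hiN).2 (Nat.even_iff.2 heven)

lemma isDownUp_of_noDD {n : ℕ} {π : Equiv.Perm (Fin (2 * n + 1))} (hdd : noDD 0 π)
    (hdes : desStat π = n) : isDownUp π := by
  set D := (Icc 1 (2 * n)).filter fun i => pval π (i + 1) < pval π i
  have hmem : ∀ i, i ∈ D ↔ 1 ≤ i ∧ i ≤ 2 * n ∧ pval π (i + 1) < pval π i := by
    simp [D, and_assoc]
  have hsucc : ∀ i ∈ D, i + 1 ∉ D := fun i hi hi1 =>
    hdd (i + 1) (by omega) (by have := (hmem i).1 hi; omega) ⟨((hmem i).1 hi).2.2, ((hmem _).1 hi1).2.2⟩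
  have hlast : 2 * n ∉ D := fun h => hdd (2 * n + 1) (by omega) le_rfl
    ⟨((hmem _).1 h).2.2, (pval_of_lt π (by omega)).trans_lt (pval_pos π (by omega) le_rfl)⟩
  have hD : D = (Icc 1 (2 * n)).filter (· % 2 = 1) :=
    eq_filter_odd_of_succ_notMem
      (fun i hi => mem_Icc.2 ⟨((hmem i).1 hi).1, by
        have := ((hmem i).1 hi).2.1
        have : i ≠ 2 * n := fun h => hlast (h ▸ hi)
        omega⟩) hsucc
      (by simpa [desStat] using hdes)
  intro i hi hiN
  have hiD : i ∈ D ↔ i % 2 = 1 := by rw [hD]; simp only [mem_filter, mem_Icc]; omega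
  have := pval_ne π (i := i) (j := i + 1) hi (by omega) (by omega) hiN (by omega)
  rw [hmem] at hiD
  rw [Nat.odd_iff, Nat.even_iff]
  omega

lemma isDownUp.reverseP {n : ℕ} {π : Equiv.Perm (Fin (2 * n + 1))} (h : isDownUp π) :
    isDownUp (reverseP π) := by
  intro i hi hiN
  rw [pval_reverseP π hi (by omega), pval_reverseP π (by omega) hiN, Nat.odd_iff, Nat.even_iff,
    show 2 * n + 1 + 1 - (i + 1) = 2 * n + 1 - i by omega]
  have hdes := h.pval_succ_lt (i := 2 * n + 1 - i) (by omega) (by omega)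
  have hasc := h.lt_pval_succ (i := 2 * n + 1 - i) (by omega) (by omega)
  rw [show 2 * n + 1 - i + 1 = 2 * n + 1 + 1 - i by omega] at hdes hasc
  omega

end DownUp

section Statistics

def invSet {N : ℕ} (π : Equiv.Perm (Fin N)) : Finset (ℕ × ℕ) :=
  {p ∈ Icc 1 N ×ˢ Icc 1 N | p.1 < p.2 ∧ pval π p.2 < pval π p.1}

lemma invStat_eq_card_invSet {N : ℕ} (π : Equiv.Perm (Fin N)) : invStat π = #(invSet π) := rfl

def noninvStat {N : ℕ} (π : Equiv.Perm (Fin N)) : ℕ :=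
  #{p ∈ Icc 1 N ×ˢ Icc 1 N | p.1 < p.2 ∧ pval π p.1 < pval π p.2}

lemma invStat_reverseP {N : ℕ} (π : Equiv.Perm (Fin N)) : invStat (reverseP π) = noninvStat π := by
  refine card_nbij' (fun p => (N + 1 - p.2, N + 1 - p.1)) (fun p => (N + 1 - p.2, N + 1 - p.1))
    ?_ ?_ ?_ ?_ <;> rintro ⟨i, j⟩ hij <;>
    simp only [coe_filter, mem_product, mem_Icc, Set.mem_ofPred_eq, Prod.mk.injEq] at hij ⊢
  · rw [pval_reverseP π hij.1.1.1 hij.1.1.2, pval_reverseP π hij.1.2.1 hij.1.2.2] at hij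
    omega
  · rw [pval_reverseP π (by omega) (by omega), pval_reverseP π (by omega) (by omega),
      show N + 1 - (N + 1 - i) = i by omega, show N + 1 - (N + 1 - j) = j by omega]
    omega
  all_goals omega

lemma invStat_add_noninvStat {N : ℕ} (π : Equiv.Perm (Fin N)) :
    invStat π + noninvStat π = N.choose 2 := by
  have hpairs := card_product_filter_lt (s := Icc 1 N)
  rw [Nat.card_Icc, Nat.add_sub_cancel] at hpairs
  rw [← hpairs, ← card_filter_add_card_filter_not (fun p => pval π p.2 < pval π p.1), filter_filter,
    filter_filter, invStat, noninvStat]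
  congr 2
  refine filter_congr fun p hp => and_congr_right fun hlt => ?_
  simp only [mem_product, mem_Icc] at hp
  have := pval_ne π hp.1.1 hp.1.2 hp.2.1 hp.2.2 hlt.ne
  omega

lemma adiStat_eq_invStat_of_isDownUp {n : ℕ} {π : Equiv.Perm (Fin (2 * n + 1))}
    (h : isDownUp π) : adiStat π = invStat π := by
  refine congrArg card (filter_congr fun ⟨i, j⟩ hp => ?_)
  simp only [mem_product, mem_Icc] at hp ⊢
  refine ⟨fun h => ⟨h.1, h.2.1⟩, fun ⟨hij, hinv⟩ => ⟨hij, hinv, ?_⟩⟩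
  obtain ⟨⟨hi, -⟩, -, hj⟩ := hp
  rcases Nat.even_or_odd' j with ⟨k, rfl | rfl⟩
  · exact .inl ⟨by omega, h.lt_pval_succ (by omega) (by omega) (by omega)⟩
  · have hasc := h.lt_pval_succ (i := 2 * k) (by omega) (by omega) (by omega)
    have : i ≠ 2 * k := by rintro rfl; omega
    exact .inr ⟨2 * k, by omega, by omega, hasc⟩

variable {n : ℕ} {π : Equiv.Perm (Fin (2 * n + 1))}

lemma card_invSet_filter_even (h : isDownUp π) (hπ : avoids π ![2, 1, 3]) :
    #{p ∈ invSet π | p.2 % 2 = 0} = v3_12 π := by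
  rw [v3_12, Nat.add_sub_cancel]
  refine congrArg card (ext fun ⟨i, j⟩ => ?_)
  simp only [invSet, mem_filter, mem_product, mem_Icc]
  constructor
  · rintro ⟨⟨⟨⟨hi, -⟩, hj, hjN⟩, hij, hinv⟩, hjeven⟩
    exact ⟨⟨⟨hi, by omega⟩, hj, by omega⟩, hij, h.lt_pval_succ hj (by omega) hjeven,
      pval_succ_lt_of_inversion π hπ hi hij (by omega) hinv⟩
  · rintro ⟨⟨⟨hi, -⟩, hj, hjN⟩, hij, hasc, hinv⟩
    have hjeven : j % 2 = 0 := by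
      by_contra hodd
      have := h.pval_succ_lt hj (by omega) (by omega)
      omega
    exact ⟨⟨⟨⟨hi, by omega⟩, hj, by omega⟩, hij, by omega⟩, hjeven⟩

lemma card_invSet_filter_odd (h : isDownUp π) :
    #{p ∈ invSet π | ¬ p.2 % 2 = 0} = v3_12 π := by
  rw [v3_12, Nat.add_sub_cancel]
  refine card_nbij' (fun p => (p.1, p.2 - 1)) (fun p => (p.1, p.2 + 1)) ?_ ?_ ?_ ?_ <;>
    rintro ⟨i, j⟩ hp <;>
    simp only [invSet, coe_filter, mem_filter, mem_product, mem_Icc, Set.mem_ofPred_eq,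
      Prod.mk.injEq, true_and] at hp ⊢
  · obtain ⟨⟨⟨⟨hi, -⟩, -, hj⟩, hij, hinv⟩, hjodd⟩ := hp
    have hasc := h.lt_pval_succ (i := j - 1) (by omega) (by omega) (by omega)
    rw [show j - 1 + 1 = j by omega] at hasc ⊢
    have : i ≠ j - 1 := by rintro rfl; omega
    omega
  · obtain ⟨⟨⟨hi, -⟩, hj, hjN⟩, hij, hasc, hinv⟩ := hp
    have hjeven : j % 2 = 0 := by
      by_contra hodd
      have := h.pval_succ_lt hj (by omega) (by omega)
      omega
    omega
  all_goals omega

lemma invStat_eq_two_mul_v3_12 (h : isDownUp π) (hπ : avoids π ![2, 1, 3]) :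
    invStat π = 2 * v3_12 π := by
  rw [invStat_eq_card_invSet, ← card_filter_add_card_filter_not (fun p => p.2 % 2 = 0),
    card_invSet_filter_even h hπ, card_invSet_filter_odd h]
  omega

lemma noninvStat_eq_v31_2 (h : isDownUp π) (hπ : avoids π ![2, 1, 3]) :
    noninvStat π = v31_2 π := by
  refine card_nbij' (fun p => (p.1 - 1, p.2)) (fun p => (p.1 + 1, p.2)) ?_ ?_ ?_ ?_ <;>
    rintro ⟨i, j⟩ hp <;>
    simp only [coe_filter, mem_product, mem_Icc, Set.mem_ofPred_eq, Prod.mk.injEq, and_true] at hp ⊢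
  · obtain ⟨⟨⟨hi, -⟩, -, hj⟩, hij, hlt⟩ := hp
    have hieven : i % 2 = 0 := by
      by_contra hodd
      have := pval_lt_of_descent π hπ hi (h.pval_succ_lt hi (by omega) (by omega)) hij hj
      omega
    have hdes := h.pval_succ_lt (i := i - 1) (by omega) (by omega) (by omega)
    have := pval_lt_of_descent π hπ (by omega) hdes (by omega : i - 1 < j) hj
    rw [show i - 1 + 1 = i by omega] at hdes ⊢
    omega
  all_goals omega

end Statistics

/-- inversions of odd down-up permutations are admissible, and
properties of adi on T_{2n+1,n}(213). -/
theorem stmt9 (n : ℕ) :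
    (∀ π : Equiv.Perm (Fin (2 * n + 1)), isDownUp π → adiStat π = invStat π) ∧
    (∀ π : Equiv.Perm (Fin (2 * n + 1)),
      avoids π ![2,1,3] → noDD 0 π → desStat π = n →
        adiStat π + adiStat (reverseP π) = 2 * n ^ 2 + n ∧
        adiStat π = 2 * v3_12 π ∧
        adiStat (reverseP π) = v31_2 π) := by
  refine ⟨fun π => adiStat_eq_invStat_of_isDownUp, fun π hπ hdd hdes => ?_⟩
  have h := isDownUp_of_noDD hdd hdes
  rw [adiStat_eq_invStat_of_isDownUp h, adiStat_eq_invStat_of_isDownUp h.reverseP,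
    invStat_reverseP]
  refine ⟨?_, invStat_eq_two_mul_v3_12 h hπ, noninvStat_eq_v31_2 h hπ⟩
  rw [invStat_add_noninvStat, Nat.choose_two_right, Nat.add_sub_cancel]
  exact Nat.div_eq_of_eq_mul_left two_pos (by ring)
end
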